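/- arXiv:math/0212395 — 2 statements merged into one kernel-verified Lean document; each statement's English description precedes it below -/
import Mathlib

section
/- Newman's theorem on rational approximation of the absolute value: there exist constants C > 0 and c > 0 such that for every n ≥ 1 there are real polynomials p and q, each of degree at most n, with q(t) ≠ 0 for all t ∈ [−1,1], such that sup_{t ∈ [−1,1]} | |t| − p(t)/q(t) | ≤ C e^{−c√n}. -/
open Set

set_option maxHeartbeats 1000000


private lemma abs_sub_le_of_ratio (a b : ℝ) (h1 : a ≤ 4*b) (h2 : b ≤ 4*a) :
    |a - b| ≤ (3/4) * (a + b) := by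
  rcases abs_cases (a - b) with ⟨h, _⟩ | ⟨h, _⟩ <;> rw [h] <;> linarith

private lemma newman_key (n : ℕ) (hn : 16 ≤ n) :
    ∃ p q : Polynomial ℝ, p.degree ≤ n ∧ q.degree ≤ n ∧
      (∀ t ∈ Icc (-1:ℝ) 1, q.eval t ≠ 0) ∧
      (∀ t ∈ Icc (-1:ℝ) 1,
        |(|t| - p.eval t / q.eval t)| ≤ 6 * Real.exp (-(1/4) * Real.sqrt n)) := by
  have hn1 : 1 ≤ n := le_trans (by norm_num) hn
  set s : ℝ := Real.sqrt n with hsdef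
  have hs0 : 0 < s := Real.sqrt_pos.mpr (by positivity)
  have hs2 : s ^ 2 = n := Real.sq_sqrt (by positivity)
  have hs4 : 4 ≤ s := by
    have h4 : (4:ℝ) = Real.sqrt 16 := by
      rw [show (16:ℝ) = 4^2 by norm_num, Real.sqrt_sq (by norm_num)]
    rw [hsdef, h4]
    exact Real.sqrt_le_sqrt (by exact_mod_cast hn)
  obtain ⟨ξ, hξdef⟩ : ∃ x : ℝ, x = Real.exp (-(1/s)) := ⟨_, rfl⟩
  have hξ0 : 0 < ξ := by rw [hξdef]; exact Real.exp_pos _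
  have hξ1 : ξ < 1 := by
    rw [hξdef]
    exact Real.exp_lt_one_iff.mpr (neg_lt_zero.mpr (by positivity))
  obtain ⟨d, hddef⟩ : ∃ d : ℕ, d = ⌈s⌉₊ := ⟨_, rfl⟩
  obtain ⟨m, hmdef⟩ : ∃ m : ℕ, m = n - 1 := ⟨_, rfl⟩
  have hmc : (m:ℝ) = (n:ℝ) - 1 := by
    rw [hmdef]; push_cast [Nat.cast_sub hn1]; ring
  have hsd : s ≤ d := by rw [hddef]; exact Nat.le_ceil s
  have hd1 : (d:ℝ) ≤ s + 1 := by rw [hddef]; exact (Nat.ceil_lt_add_one hs0.le).le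
  have hd4 : 4 ≤ d := by exact_mod_cast le_trans hs4 hsd
  have hm2d : 2 * d ≤ m := by
    have : (2:ℝ) * d ≤ (m:ℝ) := by nlinarith
    exact_mod_cast this
  have hm1 : 1 ≤ m := le_trans (by omega) hm2d
  -- power of ξ as exp
  have hξpow : ∀ k : ℕ, ξ ^ k = Real.exp (-(k / s)) := by
    intro k
    rw [hξdef, ← Real.exp_nat_mul]
    ring_nf
  -- the function F
  obtain ⟨F, hFdef⟩ : ∃ F : ℝ → ℝ, F = fun u => ∏ k ∈ Finset.Icc 1 m, (u + ξ ^ k) := ⟨_, rfl⟩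
  have hFpos : ∀ u : ℝ, 0 ≤ u → 0 < F u := by
    intro u hu
    rw [hFdef]
    exact Finset.prod_pos fun k _ => by have := pow_pos hξ0 k; linarith
  -- polynomials
  obtain ⟨N, hNdef⟩ : ∃ N : Polynomial ℝ,
      N = ∏ k ∈ Finset.Icc 1 m, (Polynomial.X + Polynomial.C (ξ ^ k)) := ⟨_, rfl⟩
  obtain ⟨p, hpdef⟩ : ∃ p : Polynomial ℝ,
      p = Polynomial.X * (N - N.comp (-Polynomial.X)) := ⟨_, rfl⟩
  obtain ⟨q, hqdef⟩ : ∃ q : Polynomial ℝ, q = N + N.comp (-Polynomial.X) := ⟨_, rfl⟩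
  have hNeval : ∀ t : ℝ, N.eval t = F t := by
    intro t
    rw [hNdef, Polynomial.eval_prod]
    simp only [hFdef]
    exact Finset.prod_congr rfl fun k _ => by simp
  have hNeval' : ∀ t : ℝ, (N.comp (-Polynomial.X)).eval t = F (-t) := by
    intro t
    rw [Polynomial.eval_comp]
    simp [hNeval]
  have hqe : ∀ t : ℝ, q.eval t = F t + F (-t) := by
    intro t; rw [hqdef]; simp [hNeval, hNeval']
  have hpe : ∀ t : ℝ, p.eval t = t * (F t - F (-t)) := by
    intro t; rw [hpdef]; simp [hNeval, hNeval']
  -- degrees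
  have hNdeg : N.natDegree ≤ m := by
    rw [hNdef]
    calc (∏ k ∈ Finset.Icc 1 m, (Polynomial.X + Polynomial.C (ξ ^ k))).natDegree ≤ ∑ k ∈ Finset.Icc 1 m, (Polynomial.X + Polynomial.C (ξ ^ k)).natDegree :=
          Polynomial.natDegree_prod_le _ _
    _ = ∑ k ∈ Finset.Icc 1 m, 1 := Finset.sum_congr rfl fun k _ => Polynomial.natDegree_X_add_C _
    _ = m := by simp
  have hNcdeg : (N.comp (-Polynomial.X)).natDegree ≤ m := by
    calc (N.comp (-Polynomial.X)).natDegree ≤ N.natDegree * (-Polynomial.X : Polynomial ℝ).natDegree :=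
          Polynomial.natDegree_comp_le
    _ ≤ m * 1 := Nat.mul_le_mul hNdeg (by simp)
    _ = m := by ring
  have hpdeg : p.degree ≤ (n : WithBot ℕ) := by
    apply Polynomial.degree_le_of_natDegree_le
    rw [hpdef]
    calc (Polynomial.X * (N - N.comp (-Polynomial.X))).natDegree ≤ (Polynomial.X : Polynomial ℝ).natDegree + (N - N.comp (-Polynomial.X)).natDegree :=
          Polynomial.natDegree_mul_le
    _ ≤ 1 + max N.natDegree (N.comp (-Polynomial.X)).natDegree := by
          gcongr
          · simp
          · exact Polynomial.natDegree_sub_le _ _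
    _ ≤ 1 + m := by omega
    _ ≤ n := by omega
  have hqdeg : q.degree ≤ (n : WithBot ℕ) := by
    apply Polynomial.degree_le_of_natDegree_le
    rw [hqdef]
    calc (N + N.comp (-Polynomial.X)).natDegree ≤ max N.natDegree (N.comp (-Polynomial.X)).natDegree :=
          Polynomial.natDegree_add_le _ _
    _ ≤ n := by omega
  -- basic product facts
  have hBabs : ∀ t : ℝ, 0 ≤ t → |F (-t)| ≤ F t := by
    intro t ht
    simp only [hFdef]
    rw [Finset.abs_prod]
    apply Finset.prod_le_prod (fun k _ => abs_nonneg _)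
    intro k _
    have hk : 0 < ξ ^ k := pow_pos hξ0 k
    rw [abs_le]; constructor <;> nlinarith
  -- THE MAIN ESTIMATE
  have key : ∀ t : ℝ, 0 ≤ t → t ≤ 1 →
      0 < F t + F (-t) ∧
      |t - t * (F t - F (-t)) / (F t + F (-t))| ≤ 6 * Real.exp (-(1/4) * s) := by
    intro t ht0 ht1
    set A := F t with hAdef
    set B := F (-t) with hBdef
    have hA : 0 < A := hFpos t ht0
    have hab : |B| ≤ A := hBabs t ht0
    -- the error identity
    have herr : ∀ hD : 0 < A + B, |t - t * (A - B) / (A + B)| = 2 * t * |B| / (A + B) := by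
      intro hD
      have : t - t * (A - B) / (A + B) = (2 * t * B) / (A + B) := by
        field_simp; ring
      rw [this, abs_div, abs_of_pos hD, abs_mul, abs_of_nonneg (by positivity : (0:ℝ) ≤ 2*t)]
    rcases le_or_gt t (ξ ^ m) with hcase | hcase
    · -- small t : B ≥ 0
      have hB0 : 0 ≤ B := by
        rw [hBdef]
        simp only [hFdef]
        apply Finset.prod_nonneg
        intro k hk
        simp only [Finset.mem_Icc] at hk
        have : ξ ^ m ≤ ξ ^ k := pow_le_pow_of_le_one hξ0.le hξ1.le hk.2
        linarith
      have hD : 0 < A + B := by linarith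
      refine ⟨hD, ?_⟩
      rw [herr hD, abs_of_nonneg hB0]
      have h1 : 2 * t * B / (A + B) ≤ 2 * t := by
        rw [div_le_iff₀ hD]
        nlinarith [mul_nonneg ht0 hA.le]
      have h2 : (2:ℝ) * t ≤ 2 * ξ ^ m := by linarith
      have h3 : ξ ^ m ≤ Real.exp (-(1/4) * s) := by
        rw [hξpow m, Real.exp_le_exp]
        have : (1/4) * s * s ≤ (m:ℝ) := by
          nlinarith [hs2, (by exact_mod_cast hn : (16:ℝ) ≤ (n:ℝ)), hmc]
        have := (le_div_iff₀ hs0).mpr this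
        linarith
      linarith [Real.exp_pos (-(1/4) * s)]
    · -- main region: ξ^m < t ≤ 1
      have ht0' : 0 < t := (pow_pos hξ0 m).trans hcase
      -- the index j
      set L : ℝ := -s * Real.log t with hLdef
      have hL0 : 0 ≤ L := by
        have := Real.log_nonpos ht0 ht1
        rw [hLdef]; nlinarith
      set j : ℕ := ⌊L⌋₊ with hjdef
      have hjL : (j:ℝ) ≤ L := Nat.floor_le hL0
      have hLj : L < j + 1 := Nat.lt_floor_add_one L
      have htj : t ≤ ξ ^ j := by
        rw [hξpow j, ← Real.exp_log ht0', Real.exp_le_exp]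
        rw [show -((j:ℝ)/s) = (-(j:ℝ))/s by ring, le_div_iff₀ hs0]
        rw [hLdef] at hjL
        nlinarith
      have htj' : ξ ^ (j+1) ≤ t := by
        rw [hξpow (j+1), ← Real.exp_log ht0', Real.exp_le_exp]
        push_cast
        rw [show -(((j:ℝ)+1)/s) = (-((j:ℝ)+1))/s by ring, div_le_iff₀ hs0]
        rw [hLdef] at hLj
        nlinarith
      have hjm : j + 1 ≤ m := by
        by_contra hc
        push_neg at hc
        have : ξ ^ j ≤ ξ ^ m := pow_le_pow_of_le_one hξ0.le hξ1.le (by omega)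
        linarith
      -- bound exp(5/4) ≤ 4 and ξ^d ≥ 1/4
      have hexp54 : Real.exp (5/4) ≤ 4 := by
        have h2 : (5:ℝ)/4 ≤ Real.log 4 := by
          rw [show (4:ℝ) = 2^2 by norm_num, Real.log_pow]
          have := Real.log_two_gt_d9
          push_cast
          linarith
        calc Real.exp (5/4) ≤ Real.exp (Real.log 4) := Real.exp_le_exp.mpr h2
        _ = 4 := Real.exp_log (by norm_num)
      have hξd : (1:ℝ)/4 ≤ ξ ^ d := by
        rw [hξpow d]
        have h54 : (d:ℝ)/s ≤ 5/4 := by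
          rw [div_le_iff₀ hs0]; nlinarith
        have : Real.exp (-(5/4)) ≤ Real.exp (-((d:ℝ)/s)) := by
          rw [Real.exp_le_exp]; linarith
        have h2 : Real.exp (-(5/4)) = 1 / Real.exp (5/4) := by
          rw [Real.exp_neg]; ring
        have h3 : (1:ℝ)/4 ≤ 1 / Real.exp (5/4) := by
          rw [div_le_div_iff₀ (by norm_num) (Real.exp_pos _)]
          linarith [Real.exp_pos (5/4 : ℝ)]
        linarith
      -- the window
      obtain ⟨W, hWsub, hWcard, hWk⟩ :
          ∃ W : Finset ℕ, W ⊆ Finset.Icc 1 m ∧ W.card = d ∧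
            ∀ k ∈ W, ξ ^ k ≤ 4 * t ∧ t ≤ 4 * ξ ^ k := by
        rcases le_or_gt (j + d) m with hjd | hjd
        · refine ⟨Finset.Icc (j+1) (j+d), Finset.Icc_subset_Icc (by omega) hjd, ?_, ?_⟩
          · rw [Nat.card_Icc]; omega
          · intro k hk
            simp only [Finset.mem_Icc] at hk
            constructor
            · have : ξ ^ k ≤ ξ ^ (j+1) := pow_le_pow_of_le_one hξ0.le hξ1.le hk.1
              linarith
            · have h1 : ξ ^ (j+d) ≤ ξ ^ k := pow_le_pow_of_le_one hξ0.le hξ1.le hk.2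
              have h2 : ξ ^ (j+d) = ξ ^ j * ξ ^ d := pow_add ξ j d
              nlinarith [pow_nonneg hξ0.le j]
        · have hjd' : d ≤ j := by omega
          refine ⟨Finset.Icc (j-d+1) j, Finset.Icc_subset_Icc (by omega) (by omega), ?_, ?_⟩
          · rw [Nat.card_Icc]; omega
          · intro k hk
            simp only [Finset.mem_Icc] at hk
            constructor
            · have h1 : ξ ^ (k+d) ≤ ξ ^ (j+1) := pow_le_pow_of_le_one hξ0.le hξ1.le (by omega)
              have h2 : ξ ^ (k+d) = ξ ^ k * ξ ^ d := pow_add ξ k d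
              nlinarith [pow_nonneg hξ0.le k]
            · have : ξ ^ j ≤ ξ ^ k := pow_le_pow_of_le_one hξ0.le hξ1.le hk.2
              linarith
      -- product bound : |B| ≤ (3/4)^d * A
      have hW : |B| ≤ (3/4)^d * A := by
        rw [hBdef]
        simp only [hFdef]
        rw [Finset.abs_prod]
        calc ∏ k ∈ Finset.Icc 1 m, |(-t) + ξ ^ k|
            ≤ ∏ k ∈ Finset.Icc 1 m, ((if k ∈ W then (3/4:ℝ) else 1) * (t + ξ ^ k)) := by
              apply Finset.prod_le_prod (fun k _ => abs_nonneg _)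
              intro k hk
              have hk0 : (0:ℝ) < ξ ^ k := pow_pos hξ0 k
              by_cases hkW : k ∈ W
              · simp only [hkW, if_true]
                have h := hWk k hkW
                have h2 : |(-t) + ξ ^ k| = |ξ ^ k - t| := by rw [show (-t) + ξ^k = ξ^k - t by ring]
                rw [h2]
                have := abs_sub_le_of_ratio (ξ ^ k) t h.1 h.2
                calc |ξ ^ k - t| ≤ 3/4 * (ξ ^ k + t) := this
                  _ = 3/4 * (t + ξ ^ k) := by ring
              · simp only [hkW, if_false, one_mul]
                rw [abs_le]; constructor <;> nlinarith
        _ = (∏ k ∈ Finset.Icc 1 m, (if k ∈ W then (3/4:ℝ) else 1)) *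
              ∏ k ∈ Finset.Icc 1 m, (t + ξ ^ k) := Finset.prod_mul_distrib
        _ = (3/4)^d * A := by
              rw [Finset.prod_ite_mem, Finset.inter_eq_right.mpr hWsub,
                Finset.prod_const, hWcard, hAdef]
              simp only [hFdef]
      have h34d : ((3:ℝ)/4)^d ≤ 1/2 := by
        calc ((3:ℝ)/4)^d ≤ (3/4)^4 := pow_le_pow_of_le_one (by norm_num) (by norm_num) hd4
        _ ≤ 1/2 := by norm_num
      have hBA : |B| ≤ A/2 := by
        have := mul_le_mul_of_nonneg_right h34d hA.le
        linarith [hW]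
      have hD : 0 < A + B := by
        rcases abs_le.mp hBA with ⟨h1, _⟩
        linarith
      refine ⟨hD, ?_⟩
      rw [herr hD]
      have hstep : 2 * t * |B| / (A + B) ≤ 4 * (3/4)^d := by
        rw [div_le_iff₀ hD]
        have hP : (0:ℝ) ≤ (3/4:ℝ)^d := pow_nonneg (by norm_num) d
        have h1 : 2 * t * |B| ≤ 2 * (3/4)^d * A := by
          have := mul_le_mul_of_nonneg_right ht1 (abs_nonneg B)
          linarith [hW]
        rcases abs_le.mp hBA with ⟨h2, _⟩
        have h3 : (4*(3/4:ℝ)^d) * (A/2) ≤ (4*(3/4:ℝ)^d) * (A+B) :=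
          mul_le_mul_of_nonneg_left (by linarith) (by linarith)
        calc 2*t*|B| ≤ 2*(3/4)^d*A := h1
          _ = (4*(3/4:ℝ)^d) * (A/2) := by ring
          _ ≤ (4*(3/4:ℝ)^d) * (A+B) := h3
          _ = 4*(3/4)^d*(A+B) := by ring
      have hfin : (4:ℝ) * (3/4)^d ≤ 6 * Real.exp (-(1/4) * s) := by
        have h1 : ((3:ℝ)/4)^d ≤ Real.exp (-(1/4))^d := by
          apply pow_le_pow_left₀ (by norm_num)
          linarith [Real.add_one_le_exp (-(1/4) : ℝ)]
        have h2 : Real.exp (-(1/4))^d = Real.exp ((d:ℝ) * (-(1/4))) := (Real.exp_nat_mul _ d).symm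
        have h3 : Real.exp ((d:ℝ) * (-(1/4))) ≤ Real.exp (-(1/4) * s) := by
          rw [Real.exp_le_exp]; linarith
        linarith [Real.exp_pos (-(1/4) * s)]
      linarith
  -- assemble
  refine ⟨p, q, hpdeg, hqdeg, ?_, ?_⟩
  · intro t ht
    simp only [mem_Icc] at ht
    have h1 : q.eval t = F |t| + F (-|t|) := by
      rcases abs_cases t with ⟨h, _⟩ | ⟨h, _⟩
      · rw [h, hqe]
      · rw [h, hqe, neg_neg]; ring
    have h2 : |t| ≤ 1 := abs_le.mpr ⟨ht.1, ht.2⟩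
    have := (key |t| (abs_nonneg t) h2).1
    rw [h1]; linarith
  · intro t ht
    simp only [mem_Icc] at ht
    have h2 : |t| ≤ 1 := abs_le.mpr ⟨ht.1, ht.2⟩
    have hq : q.eval t = F |t| + F (-|t|) := by
      rcases abs_cases t with ⟨h, _⟩ | ⟨h, _⟩
      · rw [h, hqe]
      · rw [h, hqe, neg_neg]; ring
    have hp : p.eval t = |t| * (F |t| - F (-|t|)) := by
      rcases abs_cases t with ⟨h, _⟩ | ⟨h, _⟩
      · rw [h, hpe]
      · rw [h, hpe, neg_neg]; ring
    rw [hp, hq]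
    exact (key |t| (abs_nonneg t) h2).2

/-- Newman's theorem on rational approximation of the absolute
value function: there are constants `C, c > 0` such that for every `n ≥ 1`
there are real polynomials `p, q` of degree at most `n`, with `q` nonvanishing
on `[-1,1]`, such that `sup_{t ∈ [-1,1]} | |t| - p(t)/q(t) | ≤ C e^{-c √n}`. -/
theorem newman_rational_approx_abs :
    ∃ C c : ℝ, 0 < C ∧ 0 < c ∧ ∀ n : ℕ, 1 ≤ n →
      ∃ p q : Polynomial ℝ, p.degree ≤ n ∧ q.degree ≤ n ∧
        (∀ t ∈ Icc (-1:ℝ) 1, q.eval t ≠ 0) ∧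
        (∀ t ∈ Icc (-1:ℝ) 1,
          |(|t| - p.eval t / q.eval t)| ≤ C * Real.exp (-c * Real.sqrt n)) := by
  refine ⟨6, 1/4, by norm_num, by norm_num, ?_⟩
  intro n hn
  rcases le_or_gt 16 n with h | h
  · obtain ⟨p, q, h1, h2, h3, h4⟩ := newman_key n h
    refine ⟨p, q, h1, h2, h3, ?_⟩
    intro t ht
    exact h4 t ht
  · refine ⟨0, 1, by simp, by simp, by simp, ?_⟩
    intro t ht
    simp only [mem_Icc] at ht
    rw [Polynomial.eval_zero, Polynomial.eval_one, zero_div, sub_zero, abs_abs]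
    have h1 : Real.sqrt n ≤ 4 := by
      rw [show (4:ℝ) = Real.sqrt 16 by
        rw [show (16:ℝ) = 4^2 by norm_num, Real.sqrt_sq (by norm_num)]]
      exact Real.sqrt_le_sqrt (by exact_mod_cast h.le)
    have h2 : Real.exp (-1) ≤ Real.exp (-(1/4) * Real.sqrt n) := by
      rw [Real.exp_le_exp]
      nlinarith [Real.sqrt_nonneg (n:ℝ)]
    have h3 : (1:ℝ)/3 ≤ Real.exp (-1) := by
      rw [Real.exp_neg]
      have he : Real.exp 1 ≤ 3 := by linarith [Real.exp_one_lt_d9]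
      rw [div_le_iff₀ (by norm_num : (0:ℝ) < 3)] at *
      have := Real.exp_pos 1
      rw [inv_mul_eq_div, le_div_iff₀ this]
      linarith
    have h4 : |t| ≤ 1 := abs_le.mpr ⟨ht.1, ht.2⟩
    linarith
end

section
/- Embedding of Besov sequence balls into weak-ℓ^τ: let 0 < p < ∞, 0 < q < ∞, and σ > max(0, 1/p − 1/2); set s = σ + 1/2 − 1/p and τ = 1/(σ + 1/2). Then there is a constant C = C(p,q,σ) such that for every A > 0 and every doubly indexed sequence α = (α_{j,k})_{j ≥ 0, 0 ≤ k < 2^j} with ‖α‖_{b^σ_{p,q}} ≤ A, one has for all ε > 0: card{(j,k) : |α_{j,k}| > ε} ≤ C (A/ε)^{τ}. -/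
open Set

/-- Index set for wavelet-type coefficient sequences of functions on `[0,1]`:
levels `j ≥ 0`, positions `0 ≤ k < 2^j`. -/
abbrev BesovIdx := (j : ℕ) × Fin (2 ^ j)

/-- The `j`-th level term of the `q`-th power of the Besov sequence norm
`‖α‖_{b^σ_{p,q}} = (∑_j 2^{jsq} (∑_k |α_{j,k}|^p)^{q/p})^{1/q}`,
where `s = σ + 1/2 - 1/p`. -/
noncomputable def besovLevel (p q σ : ℝ) (α : BesovIdx → ℝ) (j : ℕ) : ℝ :=
  (2:ℝ) ^ ((j:ℝ) * (σ + 1/2 - 1/p) * q) *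
    (∑ k : Fin (2 ^ j), |α ⟨j, k⟩| ^ p) ^ (q / p)

/-!
On each level the Besov bound gives `∑_k |α_{j,k}|^p ≤ A^p 2^{-j s p}`, so at most
`min(2^j, (A/ε)^p 2^{-j s p})` coefficients of level `j` exceed `ε`. With
`B = (A/ε)^τ` one has `(A/ε)^p = B^{1 + s p}`; the levels with `2^j ≤ B` contribute at most
a geometric sum `< 2B`, and the remaining ones a geometric series `≤ B / (1 - 2^{-s p})`.
-/

open Finset

theorem rpow_one_add_mul_two_rpow_neg_pow_le {a B : ℝ} (ha : 0 ≤ a) (hB : 0 < B) {j : ℕ}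
    (hBj : B ≤ 2 ^ j) : B ^ (1 + a) * ((2 : ℝ) ^ (-a)) ^ j ≤ B := by
  calc B ^ (1 + a) * ((2 : ℝ) ^ (-a)) ^ j
      = B ^ (1 + a) * ((2 : ℝ) ^ j) ^ (-a) := by
        rw [← Real.rpow_mul_natCast zero_le_two, mul_comm (-a),
          Real.rpow_natCast_mul zero_le_two]
    _ ≤ B ^ (1 + a) * B ^ (-a) := mul_le_mul_of_nonneg_left
        (Real.rpow_le_rpow_of_nonpos hB hBj (neg_nonpos.mpr ha)) (by positivity)
    _ = B := by rw [← Real.rpow_add hB]; simp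

theorem sum_le_of_le_two_pow_of_le_geometric {a B : ℝ} (ha : 0 < a) (hB : 0 ≤ B)
    {n : ℕ → ℕ} (h_two_pow : ∀ j, n j ≤ 2 ^ j)
    (h_geom : ∀ j, (n j : ℝ) ≤ B ^ (1 + a) * ((2 : ℝ) ^ (-a)) ^ j) (J : Finset ℕ) :
    (∑ j ∈ J, n j : ℝ) ≤ (2 + 1 / (1 - 2 ^ (-a))) * B := by
  set r : ℝ := 2 ^ (-a)
  have hr0 : 0 ≤ r := by positivity
  have hr1 : r < 1 := Real.rpow_lt_one_of_one_lt_of_neg one_lt_two (neg_neg_of_pos ha)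
  rcases lt_or_ge B 1 with hB1 | hB1
  · -- integer counts below `B ^ (1 + a) < 1` vanish
    have hn : ∀ j, n j = 0 := fun j => by
      have : (n j : ℝ) < 1 := (h_geom j).trans_lt <| mul_lt_one_of_nonneg_of_lt_one_left
        (by positivity) (Real.rpow_lt_one hB hB1 (by linarith)) (pow_le_one₀ hr0 hr1.le)
      exact_mod_cast Nat.lt_one_iff.mp (by exact_mod_cast this)
    simp only [hn, Nat.cast_zero, sum_const_zero]
    positivity
  obtain ⟨m, h2m, hBm⟩ := exists_nat_pow_near hB1 one_lt_two
  obtain ⟨N, hJN⟩ := J.exists_nat_subset_range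
  have low : (∑ j ∈ J with j < m + 1, n j : ℝ) ≤ 2 * B := by
    have : ∑ j ∈ J with j < m + 1, n j < 2 ^ (m + 1) :=
      (sum_le_sum fun j _ => h_two_pow j).trans_lt
        (Nat.geomSum_lt le_rfl fun j hj => (mem_filter.mp hj).2)
    calc (∑ j ∈ J with j < m + 1, n j : ℝ) ≤ 2 ^ (m + 1) := by exact_mod_cast this.le
      _ ≤ 2 * B := by rw [pow_succ']; linarith
  have high : (∑ j ∈ J with ¬j < m + 1, n j : ℝ) ≤ B / (1 - r) := by
    calc (∑ j ∈ J with ¬j < m + 1, n j : ℝ)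
        ≤ ∑ j ∈ Ico (m + 1) N, B ^ (1 + a) * r ^ j := by
          refine (sum_le_sum fun j _ => h_geom j).trans
            (sum_le_sum_of_subset_of_nonneg ?_ fun j _ _ => by positivity)
          intro j hj
          have := mem_filter.mp hj
          simp only [Finset.mem_Ico]
          exact ⟨not_lt.mp this.2, mem_range.mp (hJN this.1)⟩
      _ ≤ B ^ (1 + a) * (r ^ (m + 1) / (1 - r)) := by
          rw [← mul_sum]; gcongr; exact geom_sum_Ico_le_of_lt_one hr0 hr1
      _ ≤ B / (1 - r) := by
          rw [← mul_div_assoc]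
          exact div_le_div_of_nonneg_right
            (rpow_one_add_mul_two_rpow_neg_pow_le ha.le (by linarith) hBm.le) (sub_pos.mpr hr1).le
  rw [← sum_filter_add_sum_filter_not J (· < m + 1)]
  calc _ ≤ 2 * B + B / (1 - r) := add_le_add low high
    _ = _ := by ring

theorem card_mul_rpow_le_sum_rpow_abs {ι : Type*} [Fintype ι] {f : ι → ℝ} {ε p : ℝ}
    (hε : 0 ≤ ε) (hp : 0 ≤ p) (T : Finset ι) (hT : ∀ i ∈ T, ε < |f i|) :
    #T * ε ^ p ≤ ∑ i, |f i| ^ p :=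
  calc #T * ε ^ p = ∑ _i ∈ T, ε ^ p := by rw [sum_const, nsmul_eq_mul]
    _ ≤ ∑ i ∈ T, |f i| ^ p := sum_le_sum fun i hi => Real.rpow_le_rpow hε (hT i hi).le hp
    _ ≤ ∑ i, |f i| ^ p :=
        sum_le_sum_of_subset_of_nonneg (subset_univ T) fun _ _ _ => by positivity

theorem besovLevel_nonneg (p q σ : ℝ) (α : BesovIdx → ℝ) (j : ℕ) :
    0 ≤ besovLevel p q σ α j := by
  unfold besovLevel; positivity

theorem besovLevel_le_rpow_of_tsum_le {p q σ A : ℝ} (hq : 0 < q) {α : BesovIdx → ℝ}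
    (hsum : Summable (besovLevel p q σ α))
    (hnorm : (∑' j : ℕ, besovLevel p q σ α j) ^ (1 / q) ≤ A) (j : ℕ) :
    besovLevel p q σ α j ≤ A ^ q := by
  have htsum : 0 ≤ ∑' j, besovLevel p q σ α j := tsum_nonneg (besovLevel_nonneg p q σ α)
  calc besovLevel p q σ α j ≤ ∑' j, besovLevel p q σ α j :=
        hsum.le_tsum j fun i _ => besovLevel_nonneg p q σ α i
    _ = ((∑' j, besovLevel p q σ α j) ^ (1 / q)) ^ q := by
        rw [← Real.rpow_mul htsum, one_div_mul_cancel hq.ne', Real.rpow_one]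
    _ ≤ A ^ q := Real.rpow_le_rpow (by positivity) hnorm hq.le

theorem besovLevel_eq_rpow {p : ℝ} (hp : 0 < p) (q σ : ℝ) (α : BesovIdx → ℝ) (j : ℕ) :
    besovLevel p q σ α j = ((2 : ℝ) ^ ((j : ℝ) * ((σ + 1/2 - 1/p) * p)) *
      ∑ k, |α ⟨j, k⟩| ^ p) ^ (q / p) := by
  have hexp : (j : ℝ) * ((σ + 1/2 - 1/p) * p) * (q / p) = j * (σ + 1/2 - 1/p) * q := by
    field_simp
  rw [besovLevel, Real.mul_rpow (by positivity) (by positivity), ← Real.rpow_mul zero_le_two,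
    hexp]

theorem sum_rpow_abs_le_of_besovLevel_le {p q σ A : ℝ} (hp : 0 < p) (hq : 0 < q) (hA : 0 ≤ A)
    {α : BesovIdx → ℝ} {j : ℕ} (h : besovLevel p q σ α j ≤ A ^ q) :
    ∑ k, |α ⟨j, k⟩| ^ p ≤ A ^ p * ((2 : ℝ) ^ (-((σ + 1/2 - 1/p) * p))) ^ j := by
  set a := (σ + 1/2 - 1/p) * p
  have hA' : A ^ q = (A ^ p) ^ (q / p) := by
    rw [← Real.rpow_mul hA, mul_div_cancel₀ q hp.ne']
  rw [besovLevel_eq_rpow hp, hA', Real.rpow_le_rpow_iff (by positivity) (by positivity)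
    (div_pos hq hp)] at h
  rw [← Real.rpow_mul_natCast zero_le_two, neg_mul, Real.rpow_neg zero_le_two, mul_comm a,
    ← div_eq_mul_inv, le_div_iff₀ (by positivity), mul_comm]
  exact h

/-- embedding of Besov sequence balls into weak-`ℓ^τ`: for
`0 < p < ∞`, `0 < q < ∞`, `σ > max(0, 1/p - 1/2)` and `τ = 1/(σ + 1/2)`,
there is `C = C(p,q,σ)` such that every `α` with `‖α‖_{b^σ_{p,q}} ≤ A`
satisfies `card{(j,k) : |α_{j,k}| > ε} ≤ C (A/ε)^τ` for all `ε > 0`.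
(The cardinality bound is expressed by bounding every finite set of such
indices.) -/
theorem besov_weak_ell_tau_embedding (p q σ : ℝ)
    (hp : 0 < p) (hq : 0 < q) (hσ : max 0 (1/p - 1/2) < σ) :
    ∃ C : ℝ, 0 < C ∧ ∀ A : ℝ, 0 < A → ∀ α : BesovIdx → ℝ,
      Summable (besovLevel p q σ α) →
      (∑' j : ℕ, besovLevel p q σ α j) ^ (1 / q) ≤ A →
      ∀ ε : ℝ, 0 < ε →
        ∀ S : Finset BesovIdx, (∀ i ∈ S, ε < |α i|) →
          (S.card : ℝ) ≤ C * (A / ε) ^ (1 / (σ + 1/2)) := by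
  have hs : 0 < σ + 1/2 - 1/p := by linarith [le_max_right 0 (1/p - 1/2)]
  set a := (σ + 1/2 - 1/p) * p with ha_def
  have ha : 0 < a := mul_pos hs hp
  have hr : (2 : ℝ) ^ (-a) < 1 := Real.rpow_lt_one_of_one_lt_of_neg one_lt_two (neg_neg_of_pos ha)
  refine ⟨2 + 1 / (1 - 2 ^ (-a)), by have := sub_pos.mpr hr; positivity, ?_⟩
  intro A hA α hsum hnorm ε hε S hS
  have hexp : p = 1 / (σ + 1/2) * (1 + a) := by
    have : 0 < σ + 1/2 := by linarith [one_div_pos.mpr hp]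
    rw [ha_def, one_div_mul_eq_div, eq_div_iff this.ne']
    field_simp
    ring
  have hAε : (A / ε) ^ p = ((A / ε) ^ (1 / (σ + 1/2))) ^ (1 + a) := by
    rw [← Real.rpow_mul (by positivity), ← hexp]
  have hlevel : ∀ j, #(S.preimage (Sigma.mk j) sigma_mk_injective.injOn) * ε ^ p
      ≤ A ^ p * ((2 : ℝ) ^ (-a)) ^ j := fun j =>
    (card_mul_rpow_le_sum_rpow_abs hε.le hp.le _
      fun _ hk => hS _ (Finset.mem_preimage.mp hk)).trans
        (sum_rpow_abs_le_of_besovLevel_le hp hq hA.le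
          (besovLevel_le_rpow_of_tsum_le hq hsum hnorm j))
  rw [← sigma_image_fst_preimage_mk S, card_sigma, Nat.cast_sum]
  refine sum_le_of_le_two_pow_of_le_geometric ha (by positivity)
    (fun j => (card_le_univ _).trans_eq (Fintype.card_fin _)) (fun j => ?_) _
  rw [← hAε, Real.div_rpow hA.le hε.le, div_mul_eq_mul_div, le_div_iff₀ (by positivity)]
  exact hlevel j
end
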